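/- arXiv:2106.05421 — 2 statements merged into one kernel-verified Lean document; each statement's English description precedes it below -/
import Mathlib

section
/- The weakest liberal pre-expectation of the loop is a fixed point of the characteristic function: if the post-expectation E : Σ → ℝ≥0∞ satisfies E ≤ 1 pointwise, then the expectation wlpe E defined by (wlpe E) σ := (∑' τ, W σ τ * E τ) + (1 - ∑' τ, W σ τ) satisfies Φ_E (wlpe E) = wlpe E, and moreover (wlpe E) σ ≤ 1 for all σ. -/
open ENNReal

/-- The characteristic function of the loop `while G do body` with respect to
post-expectation `E`. -/
noncomputable def Phi {S : Type*} (G : S → Prop) [DecidablePred G] (body : S → PMF S)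
    (E : S → ℝ≥0∞) (X : S → ℝ≥0∞) : S → ℝ≥0∞ :=
  fun σ => if G σ then ∑' τ, body σ τ * X τ else E σ

theorem Phi_monotone {S : Type*} (G : S → Prop) [DecidablePred G] (body : S → PMF S)
    (E : S → ℝ≥0∞) : Monotone (Phi G body E) := by
  intro X Y hXY σ
  simp only [Phi]
  split
  · exact ENNReal.tsum_le_tsum fun τ => mul_le_mul_of_nonneg_left (hXY τ) zero_le
  · exact le_rfl

/-- The characteristic function, bundled as a monotone map on the complete
lattice of expectations. -/
noncomputable def PhiHom {S : Type*} (G : S → Prop) [DecidablePred G] (body : S → PMF S)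
    (E : S → ℝ≥0∞) : (S → ℝ≥0∞) →o (S → ℝ≥0∞) :=
  ⟨Phi G body E, Phi_monotone G body E⟩

/-- The stopped `n`-step kernels of the loop `while G do body`. -/
noncomputable def mu {S : Type*} (G : S → Prop) [DecidablePred G] [DecidableEq S]
    (body : S → PMF S) : ℕ → S → S → ℝ≥0∞
  | 0 => fun σ τ => if ¬ G σ ∧ τ = σ then 1 else 0
  | n + 1 => fun σ =>
      if G σ then (fun τ => ∑' σ', body σ σ' * mu G body n σ' τ) else mu G body 0 σ

/-- The loop's output sub-distribution. -/
noncomputable def W {S : Type*} (G : S → Prop) [DecidablePred G] [DecidableEq S]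
    (body : S → PMF S) (σ τ : S) : ℝ≥0∞ :=
  ⨆ n, mu G body n σ τ

/-- The weakest liberal pre-expectation of the loop. -/
noncomputable def wlpe {S : Type*} (G : S → Prop) [DecidablePred G] [DecidableEq S]
    (body : S → PMF S) (E : S → ℝ≥0∞) : S → ℝ≥0∞ :=
  fun σ => (∑' τ, W G body σ τ * E τ) + (1 - ∑' τ, W G body σ τ)

/-!
The kernel `W` satisfies the one-step unfolding `W σ = ∑' τ, body σ τ * W τ` on guarded states
(pass the monotone limit `⨆ n` through the sum) and `W σ = δ_σ` on unguarded ones. Since `W σ`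
has mass at most one, averaging the missing mass `1 - ∑' ρ, W τ ρ` against the distribution
`body σ` gives the missing mass of `∑' τ, body σ τ * W τ`, so both summands of `wlpe` unfold
along `body` exactly as `Phi` prescribes.
-/

theorem ENNReal.tsum_iSup_of_monotone {α : Type*} {f : ℕ → α → ℝ≥0∞} (hf : Monotone f) :
    ∑' a, ⨆ n, f n a = ⨆ n, ∑' a, f n a := by
  simp_rw [ENNReal.tsum_eq_iSup_sum,
    ENNReal.finsetSum_iSup_of_monotone fun a _ _ hmn => hf hmn a]
  exact iSup_comm

theorem ENNReal.tsum_mul_tsum_mul_comm {α β : Type*} (p : α → ℝ≥0∞) (K : α → β → ℝ≥0∞)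
    (f : β → ℝ≥0∞) :
    ∑' a, p a * ∑' b, K a b * f b = ∑' b, (∑' a, p a * K a b) * f b := by
  simp_rw [← ENNReal.tsum_mul_left, ← ENNReal.tsum_mul_right, mul_assoc]
  exact ENNReal.tsum_comm

theorem PMF.tsum_mul_one_sub {α : Type*} (p : PMF α) {f : α → ℝ≥0∞} (hf : ∀ a, f a ≤ 1) :
    ∑' a, p a * (1 - f a) = 1 - ∑' a, p a * f a := by
  have hle : ∑' a, p a * f a ≤ 1 := by
    calc ∑' a, p a * f a ≤ ∑' a, p a :=
          ENNReal.tsum_le_tsum fun a => mul_le_of_le_one_right' (hf a)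
      _ = 1 := p.tsum_coe
  refine ENNReal.eq_sub_of_add_eq (ne_top_of_le_ne_top one_ne_top hle) ?_
  rw [← ENNReal.tsum_add]
  simp_rw [← mul_add, tsub_add_cancel_of_le (hf _), mul_one]
  exact p.tsum_coe

section Loop

variable {S : Type*} (G : S → Prop) [DecidablePred G] [DecidableEq S] (body : S → PMF S)

theorem mu_succ_of_guard (n : ℕ) {σ : S} (hG : G σ) (τ : S) :
    mu G body (n + 1) σ τ = ∑' σ', body σ σ' * mu G body n σ' τ := by
  simp [mu, hG]

theorem mu_of_not_guard (n : ℕ) {σ : S} (hG : ¬ G σ) (τ : S) :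
    mu G body n σ τ = if τ = σ then 1 else 0 := by
  cases n <;> simp [mu, hG]

theorem monotone_mu : Monotone (mu G body) := by
  refine monotone_nat_of_le_succ fun n => ?_
  induction n with
  | zero =>
    intro σ τ
    by_cases hG : G σ
    · simp [mu, hG]
    · rw [mu_of_not_guard G body _ hG, mu_of_not_guard G body _ hG]
  | succ n ih =>
    intro σ τ
    by_cases hG : G σ
    · rw [mu_succ_of_guard G body n hG, mu_succ_of_guard G body (n + 1) hG]
      exact ENNReal.tsum_le_tsum fun σ' => mul_le_mul_right (ih σ' τ) _
    · rw [mu_of_not_guard G body _ hG, mu_of_not_guard G body _ hG]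

theorem W_of_not_guard {σ : S} (hG : ¬ G σ) (τ : S) :
    W G body σ τ = if τ = σ then 1 else 0 := by
  simp [W, mu_of_not_guard G body _ hG]

theorem W_of_guard {σ : S} (hG : G σ) (ρ : S) :
    W G body σ ρ = ∑' τ, body σ τ * W G body τ ρ := by
  have hmono : Monotone fun n τ => body σ τ * mu G body n τ ρ :=
    fun m n hmn τ => mul_le_mul_right (monotone_mu G body hmn τ ρ) _
  calc W G body σ ρ = ⨆ n, mu G body (n + 1) σ ρ :=
        (Monotone.iSup_nat_add (fun m n hmn => monotone_mu G body hmn σ ρ) 1).symm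
    _ = ⨆ n, ∑' τ, body σ τ * mu G body n τ ρ := by simp_rw [mu_succ_of_guard G body _ hG]
    _ = ∑' τ, body σ τ * W G body τ ρ := by
        simp_rw [← ENNReal.tsum_iSup_of_monotone hmono, W, ENNReal.mul_iSup]

theorem tsum_mu_le_one (n : ℕ) (σ : S) : ∑' τ, mu G body n σ τ ≤ 1 := by
  induction n generalizing σ with
  | zero =>
    by_cases hG : G σ
    · simp [mu, hG]
    · simp [mu_of_not_guard G body _ hG]
  | succ n ih =>
    by_cases hG : G σ
    · simp_rw [mu_succ_of_guard G body n hG]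
      rw [ENNReal.tsum_comm]
      calc ∑' σ', ∑' τ, body σ σ' * mu G body n σ' τ
          = ∑' σ', body σ σ' * ∑' τ, mu G body n σ' τ := by simp_rw [ENNReal.tsum_mul_left]
        _ ≤ ∑' σ', body σ σ' := ENNReal.tsum_le_tsum fun σ' => mul_le_of_le_one_right' (ih σ')
        _ = 1 := (body σ).tsum_coe
    · simp [mu_of_not_guard G body _ hG]

theorem tsum_W_le_one (σ : S) : ∑' τ, W G body σ τ ≤ 1 := by
  simp only [W]
  rw [ENNReal.tsum_iSup_of_monotone fun m n h τ => monotone_mu G body h σ τ]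
  exact iSup_le fun n => tsum_mu_le_one G body n σ

theorem tsum_W_mul_of_guard {σ : S} (hG : G σ) (f : S → ℝ≥0∞) :
    ∑' ρ, W G body σ ρ * f ρ = ∑' τ, body σ τ * ∑' ρ, W G body τ ρ * f ρ := by
  rw [ENNReal.tsum_mul_tsum_mul_comm]
  simp_rw [← W_of_guard G body hG]

theorem Phi_wlpe_of_guard (E : S → ℝ≥0∞) {σ : S} (hG : G σ) :
    Phi G body E (wlpe G body E) σ = wlpe G body E σ := by
  have hmass := tsum_W_mul_of_guard G body hG 1
  simp only [Pi.one_apply, mul_one] at hmass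
  simp only [Phi, hG, if_true, wlpe, mul_add]
  rw [ENNReal.tsum_add, PMF.tsum_mul_one_sub _ (tsum_W_le_one G body), ← hmass,
    ← tsum_W_mul_of_guard G body hG]

theorem Phi_wlpe_of_not_guard (E : S → ℝ≥0∞) {σ : S} (hG : ¬ G σ) :
    Phi G body E (wlpe G body E) σ = wlpe G body E σ := by
  simp [Phi, wlpe, hG, W_of_not_guard G body hG]

theorem wlpe_le_one {E : S → ℝ≥0∞} (hE : ∀ σ, E σ ≤ 1) (σ : S) :
    wlpe G body E σ ≤ 1 := by
  calc wlpe G body E σ ≤ (∑' τ, W G body σ τ) + (1 - ∑' τ, W G body σ τ) := by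
        unfold wlpe
        gcongr with τ
        exact mul_le_of_le_one_right' (hE τ)
    _ = 1 := add_tsub_cancel_of_le (tsum_W_le_one G body σ)

end Loop

theorem wlpe_fixedPoint_general {S : Type*} [DecidableEq S]
    (G : S → Prop) [DecidablePred G] (body : S → PMF S)
    (E : S → ℝ≥0∞) (hE : ∀ σ, E σ ≤ 1) :
    Phi G body E (wlpe G body E) = wlpe G body E ∧ ∀ σ, wlpe G body E σ ≤ 1 := by
  refine ⟨funext fun σ => ?_, wlpe_le_one G body hE⟩
  by_cases hG : G σ
  · exact Phi_wlpe_of_guard G body E hG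
  · exact Phi_wlpe_of_not_guard G body E hG

/-- the weakest liberal pre-expectation is a fixed point of the
characteristic function, and is bounded by one. -/
theorem wlpe_fixedPoint {S : Type*} [Countable S] [DecidableEq S]
    (G : S → Prop) [DecidablePred G] (body : S → PMF S)
    (E : S → ℝ≥0∞) (hE : ∀ σ, E σ ≤ 1) :
    Phi G body E (wlpe G body E) = wlpe G body E ∧ ∀ σ, wlpe G body E σ ≤ 1 :=
  wlpe_fixedPoint_general G body E hE
end

section
/- The weakest pre-expectation of a loop is homogeneous in the post-expectation: for every c : ℝ≥0∞ with 0 < c and c < ∞, and every post-expectation E : Σ → ℝ≥0∞, lfp Φ_{c·E} = fun σ => c * (lfp Φ_E) σ, where c·E denotes the post-expectation fun σ => c * E σ. -/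
open ENNReal

/-! Multiplication by `c`, a unit of `ℝ≥0∞`, is an order automorphism of expectations that
conjugates `Φ_E` to `Φ_{c·E}`, and order isomorphisms carry least fixed points to least fixed
points. -/

theorem OrderIso.map_lfp_of_semiconj {α β : Type*} [CompleteLattice α] [CompleteLattice β]
    (e : α ≃o β) {f : α →o α} {g : β →o β} (h : Function.Semiconj e f g) : e f.lfp = g.lfp := by
  refine le_antisymm ?_ (g.lfp_le (by rw [← h, f.map_lfp]))
  rw [← e.le_symm_apply]
  exact f.lfp_le (by rw [e.le_symm_apply, h, e.apply_symm_apply, g.map_lfp])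

def OrderIso.piCongrRight {ι : Type*} {α β : ι → Type*} [∀ i, Preorder (α i)]
    [∀ i, Preorder (β i)] (e : ∀ i, α i ≃o β i) : (∀ i, α i) ≃o ∀ i, β i where
  toEquiv := Equiv.piCongrRight fun i => (e i).toEquiv
  map_rel_iff' := forall_congr' fun i => (e i).le_iff_le

theorem Phi_mul_left {S : Type*} (G : S → Prop) [DecidablePred G] (body : S → PMF S)
    (c : ℝ≥0∞) (E X : S → ℝ≥0∞) :
    Phi G body (fun σ => c * E σ) (fun σ => c * X σ) = fun σ => c * Phi G body E X σ := by
  funext σ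
  simp only [Phi]
  split
  · rw [← ENNReal.tsum_mul_left]
    exact tsum_congr fun τ => mul_left_comm _ _ _
  · rfl

theorem lfp_smul_general {S : Type*}
    (G : S → Prop) [DecidablePred G] (body : S → PMF S)
    (c : ℝ≥0∞) (hc0 : 0 < c) (hctop : c < ⊤) (E : S → ℝ≥0∞) :
    OrderHom.lfp (PhiHom G body (fun σ => c * E σ)) =
      fun σ => c * OrderHom.lfp (PhiHom G body E) σ := by
  let scale := OrderIso.piCongrRight fun _ : S =>
    ENNReal.mulLeftOrderIso c (ENNReal.isUnit_iff.2 ⟨hc0.ne', hctop.ne⟩)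
  exact (scale.map_lfp_of_semiconj fun X => (Phi_mul_left G body c E X).symm).symm

/-- the weakest pre-expectation of a loop is homogeneous in the
post-expectation, for positive finite scalars. -/
theorem lfp_smul {S : Type*} [Countable S]
    (G : S → Prop) [DecidablePred G] (body : S → PMF S)
    (c : ℝ≥0∞) (hc0 : 0 < c) (hctop : c < ⊤) (E : S → ℝ≥0∞) :
    OrderHom.lfp (PhiHom G body (fun σ => c * E σ)) =
      fun σ => c * OrderHom.lfp (PhiHom G body E) σ :=
  lfp_smul_general G body c hc0 hctop E
end
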